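/- Let T = (Q, Σ, δ) be a G-automaton, u ∈ Σ*, and n = |Q*∘u|. If the shifted stabilizer Stab(u)·u∘ (as a subgroup of the automaton group) is nontrivial, then it contains a nontrivial element represented by a state sequence q⃗ ∈ Q̃* of length |q⃗| < 2n. -/

import Mathlib

/-- An S-automaton: a deterministic, possibly partial, letter-to-letter transducer.
`δ q a = some (b, p)` means there is a transition q --a/b--> p. Determinism is built in. -/
structure SAut (Q A : Type) where
  δ : Q → A → Option (A × Q)

namespace SAut

variable {Q A : Type}

/-- The run of the automaton starting in `q` on input `u`: output word and end state. -/
def run (T : SAut Q A) (q : Q) : List A → Option (List A × Q)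
  | [] => some ([], q)
  | a :: as => (T.δ q a).bind fun bp => (T.run bp.2 as).map fun vr => (bp.1 :: vr.1, vr.2)

/-- The partial action `q ∘ u` of a single state on a word (the output of the run). -/
def act1 (T : SAut Q A) (q : Q) (u : List A) : Option (List A) := (T.run q u).map Prod.fst

/-- The dual action `q · u` of a word on a single state (the end state of the run). -/
def dual1 (T : SAut Q A) (q : Q) (u : List A) : Option Q := (T.run q u).map Prod.snd

/-- The partial action of a state sequence on a word; the head of the list acts first
(so the list `[q₁, q₂, …, q_ℓ]` represents the composition `q_ℓ ∘ ⋯ ∘ q₂ ∘ q₁`). -/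
def act (T : SAut Q A) : List Q → List A → Option (List A)
  | [], u => some u
  | q :: qs, u => (T.act1 q u).bind (T.act qs)

/-- The dual partial action of a word on a state sequence:
`ε · u = ε` and `(p⃗ q) · u = (p⃗ · (q ∘ u)) (q · u)` (head of the list acts first). -/
def dual (T : SAut Q A) : List Q → List A → Option (List Q)
  | [], _ => some []
  | q :: qs, u =>
      (T.act1 q u).bind fun v =>
        (T.dual1 q u).bind fun qd =>
          (T.dual qs v).map fun rest => qd :: rest

/-- The orbit `Q* ∘ u` of a word under the partial action of all state sequences. -/
def orbit (T : SAut Q A) (u : List A) : Set (List A) := { v | ∃ l : List Q, T.act l u = some v }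

/-- Completeness: every state has a transition for every input letter. -/
def Complete (T : SAut Q A) : Prop := ∀ q a, (T.δ q a).isSome

/-- Reversibility: every state has at most one incoming transition with a given input letter. -/
def Reversible (T : SAut Q A) : Prop :=
  ∀ p p' a b b' q, T.δ p a = some (b, q) → T.δ p' a = some (b', q) → p = p'

/-- Invertibility (inverse-determinism): for every state and output letter there is
at most one transition with that output letter. -/
def Invertible (T : SAut Q A) : Prop :=
  ∀ q a a' b p p', T.δ q a = some (b, p) → T.δ q a' = some (b, p') → a = a'

/-- The disjoint union of two automata over the same alphabet. -/
def union (T₁ T₂ : SAut Q A) : SAut (Q ⊕ Q) A where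
  δ s a := match s with
    | Sum.inl q => (T₁.δ q a).map fun bp => (bp.1, Sum.inl bp.2)
    | Sum.inr q => (T₂.δ q a).map fun bp => (bp.1, Sum.inr bp.2)

open Classical in
/-- The inverse automaton: swap input and output labels on every transition.
(For an invertible automaton this is the deterministic inverse automaton.) -/
noncomputable def inv (T : SAut Q A) : SAut Q A where
  δ q b := if h : ∃ ap : A × Q, T.δ q ap.1 = some (b, ap.2) then some h.choose else none

/-- The union `T ⊔ T̄` of an automaton with its inverse; its states are `Q̃ = Q ⊔ Q̄`. -/
noncomputable def tilde (T : SAut Q A) : SAut (Q ⊕ Q) A := T.union T.inv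

/-- `Stab¹(u)`: all state sequences (including the empty one) defined on `u` that fix `u`. -/
def stab1 (T : SAut Q A) (u : List A) : Set (List Q) := { l | T.act l u = some u }

/-- `Stab(u)`: all nonempty state sequences defined on `u` that fix `u`. -/
def stab (T : SAut Q A) (u : List A) : Set (List Q) := { l | l ≠ [] ∧ T.act l u = some u }

/-- The shifted stabilizer `Stab¹(u) · u` as a set of state sequences. -/
def stab1Shift (T : SAut Q A) (u : List A) : Set (List Q) :=
  { l' | ∃ l ∈ T.stab1 u, T.dual l u = some l' }

/-- The orbit `Stab¹(u) · u ∘ x` of `x` under the shifted stabilizer. -/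
def stab1ShiftOrbit (T : SAut Q A) (u x : List A) : Set (List A) :=
  { y | ∃ l' ∈ T.stab1Shift u, T.act l' x = some y }

/-- The shifted stabilizer `Stab(u) · u ∘` as a set of partial functions on words. -/
def shiftedStabFun (T : SAut Q A) (u : List A) : Set (List A → Option (List A)) :=
  { f | ∃ l ∈ T.stab u, ∃ l', T.dual l u = some l' ∧ f = T.act l' }

end SAut

namespace SAut

-- ### generic lemmas

theorem run_append (T : SAut Q A) (q : Q) (u v : List A) :
    T.run q (u ++ v) = (T.run q u).bind fun p => (T.run p.2 v).map fun r => (p.1 ++ r.1, r.2) := by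
  induction u generalizing q with
  | nil => simp [run]
  | cons a as ih =>
    simp only [List.cons_append, run]
    cases T.δ q a with
    | none => simp
    | some bp =>
      simp only [Option.bind_some, List.append_eq]
      rw [ih bp.2]
      cases T.run bp.2 as with
      | none => rfl
      | some r =>
        simp only [Option.map_some, Option.bind_some]
        cases T.run r.2 v <;> simp

theorem run_length (T : SAut Q A) {q : Q} {u v : List A} {p : Q}
    (h : T.run q u = some (v, p)) : v.length = u.length := by
  induction u generalizing q v with
  | nil => simp [run] at h; simp [h.1.symm]
  | cons a as ih =>
    simp only [run] at h
    cases hδ : T.δ q a with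
    | none => simp [hδ] at h
    | some bp =>
      rw [hδ] at h
      simp only [Option.bind_some] at h
      cases hr : T.run bp.2 as with
      | none => simp [hr] at h
      | some r =>
        rw [hr] at h
        simp only [Option.map_some, Option.some_inj] at h
        have := ih (v := r.1) (q := bp.2) (by rw [hr]; cases h; rfl)
        cases h
        simp [this]

theorem act_append (T : SAut Q A) (l₁ l₂ : List Q) (w : List A) :
    T.act (l₁ ++ l₂) w = (T.act l₁ w).bind (T.act l₂) := by
  induction l₁ generalizing w with
  | nil => simp [act]
  | cons q l ih =>
    simp only [List.cons_append, act]
    cases T.act1 q w <;> simp [ih]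

theorem act1_length (T : SAut Q A) {q : Q} {u v : List A} (h : T.act1 q u = some v) :
    v.length = u.length := by
  simp only [act1] at h
  cases hr : T.run q u with
  | none => rw [hr] at h; simp at h
  | some r =>
    rw [hr] at h; simp only [Option.map_some, Option.some_inj] at h
    subst h; exact T.run_length (q := q) (by rw [hr])

theorem act_length (T : SAut Q A) {l : List Q} {u v : List A} (h : T.act l u = some v) :
    v.length = u.length := by
  induction l generalizing u with
  | nil => simp [act] at h; simp [h]
  | cons q l ih =>
    simp only [act] at h
    cases h1 : T.act1 q u with
    | none => rw [h1] at h; simp at h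
    | some w =>
      rw [h1] at h; simp only [Option.bind_some] at h
      rw [ih h, T.act1_length h1]

/-- the key "cross" lemma -/
theorem act_cross (T : SAut Q A) {l : List Q} {u v : List A} {d : List Q}
    (ha : T.act l u = some v) (hd : T.dual l u = some d) :
    ∀ x : List A, T.act l (u ++ x) = (T.act d x).map (v ++ ·) := by
  induction l generalizing u v d with
  | nil =>
    simp [act, dual] at ha hd
    subst ha; subst hd
    simp [act]
  | cons q l ih =>
    intro x
    simp only [act, dual] at ha hd ⊢
    cases hr : T.run q u with
    | none => simp [act1, hr] at ha
    | some wp =>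
      obtain ⟨w, p⟩ := wp
      have h1 : T.act1 q u = some w := by simp [act1, hr]
      have h2 : T.dual1 q u = some p := by simp [dual1, hr]
      rw [h1] at ha hd
      simp only [Option.bind_some] at ha hd
      rw [h2] at hd
      simp only [Option.bind_some] at hd
      cases hdl : T.dual l w with
      | none => simp [hdl] at hd
      | some d' =>
        rw [hdl] at hd
        simp only [Option.map_some, Option.some_inj] at hd
        subst hd
        have hx : T.act1 q (u ++ x) = (T.act1 p x).map (w ++ ·) := by
          simp only [act1, run_append, hr, Option.bind_some]
          cases T.run p x <;> simp
        rw [hx]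
        have hrhs : T.act (p :: d') x = (T.act1 p x).bind (T.act d') := rfl
        rw [hrhs]
        cases hpx : T.act1 p x with
        | none => simp
        | some y =>
          simp only [Option.map_some, Option.bind_some]
          exact ih ha hdl y

theorem dual_append (T : SAut Q A) {l₁ l₂ : List Q} {w w' : List A} {d₁ d₂ : List Q}
    (ha : T.act l₁ w = some w') (h₁ : T.dual l₁ w = some d₁) (h₂ : T.dual l₂ w' = some d₂) :
    T.dual (l₁ ++ l₂) w = some (d₁ ++ d₂) := by
  induction l₁ generalizing w d₁ with
  | nil => simp [act] at ha; simp [dual] at h₁; subst ha; subst h₁; simpa [dual]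
  | cons q l ih =>
    simp only [act, dual] at ha h₁ ⊢
    cases hq : T.act1 q w with
    | none => simp [hq] at ha
    | some v =>
      rw [hq] at ha h₁
      simp only [Option.bind_some] at ha h₁ ⊢
      cases hd1 : T.dual1 q w with
      | none => simp [hd1] at h₁
      | some p =>
        rw [hd1] at h₁
        simp only [Option.bind_some] at h₁ ⊢
        cases hdl : T.dual l v with
        | none => simp [hdl] at h₁
        | some rest =>
          rw [hdl] at h₁
          simp only [Option.map_some, Option.some_inj] at h₁
          subst h₁
          simp only [List.cons_append, dual, hq, hd1, Option.bind_some]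
          rw [ih ha hdl]
          simp



-- ## totality

theorem run_isSome {T : SAut Q A} (hC : T.Complete) (q : Q) (w : List A) :
    (T.run q w).isSome := by
  induction w generalizing q with
  | nil => simp [run]
  | cons a as ih =>
    simp only [run]
    obtain ⟨bp, hbp⟩ := Option.isSome_iff_exists.mp (hC q a)
    obtain ⟨r, hr⟩ := Option.isSome_iff_exists.mp (ih bp.2)
    rw [hbp, Option.bind_some, hr]
    simp

theorem run_eq_some {T : SAut Q A} (hC : T.Complete) (q : Q) (w : List A) :
    ∃ r, T.run q w = some r := Option.isSome_iff_exists.mp (run_isSome hC q w)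

theorem act1_eq_some {T : SAut Q A} (hC : T.Complete) (q : Q) (w : List A) :
    ∃ v, T.act1 q w = some v := by
  obtain ⟨r, hr⟩ := run_eq_some hC q w
  exact ⟨r.1, by simp [act1, hr]⟩

theorem dual1_eq_some {T : SAut Q A} (hC : T.Complete) (q : Q) (w : List A) :
    ∃ p, T.dual1 q w = some p := by
  obtain ⟨r, hr⟩ := run_eq_some hC q w
  exact ⟨r.2, by simp [dual1, hr]⟩

theorem act_eq_some {T : SAut Q A} (hC : T.Complete) (l : List Q) (w : List A) :
    ∃ v, T.act l w = some v := by
  induction l generalizing w with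
  | nil => exact ⟨w, rfl⟩
  | cons q l ih =>
    obtain ⟨v, hv⟩ := act1_eq_some hC q w
    obtain ⟨v', hv'⟩ := ih v
    exact ⟨v', by simp [act, hv, hv']⟩

theorem dual_eq_some {T : SAut Q A} (hC : T.Complete) (l : List Q) (w : List A) :
    ∃ d, T.dual l w = some d := by
  induction l generalizing w with
  | nil => exact ⟨[], rfl⟩
  | cons q l ih =>
    obtain ⟨v, hv⟩ := act1_eq_some hC q w
    obtain ⟨p, hp⟩ := dual1_eq_some hC q w
    obtain ⟨d, hd⟩ := ih v
    exact ⟨p :: d, by simp [dual, hv, hp, hd]⟩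

-- ## the inverse automaton

theorem inv_delta_eq_some {T : SAut Q A} {q : Q} {a b : A} {p : Q}
    (h : T.inv.δ q b = some (a, p)) : T.δ q a = some (b, p) := by
  simp only [inv] at h
  split at h
  · next hex =>
    simp only [Option.some_inj] at h
    have := hex.choose_spec
    rw [h] at this
    exact this
  · simp at h

theorem inv_delta_of {T : SAut Q A} (hinv : T.Invertible) {q : Q} {a b : A} {p : Q}
    (h : T.δ q a = some (b, p)) : T.inv.δ q b = some (a, p) := by
  have hex : ∃ ap : A × Q, T.δ q ap.1 = some (b, ap.2) := ⟨(a, p), h⟩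
  simp only [inv, dif_pos hex]
  have hsp := hex.choose_spec
  have ha : hex.choose.1 = a := hinv q _ a b hex.choose.2 p hsp h
  rw [ha, h] at hsp
  have hp : hex.choose.2 = p := by
    have := congrArg (Option.map Prod.snd) hsp
    simpa using this.symm
  rw [Option.some_inj, ← ha, ← hp]

theorem tilde_complete {T : SAut Q A} [Fintype A] (hc : T.Complete) (hinv : T.Invertible) :
    T.tilde.Complete := by
  rintro (q | q) b
  · obtain ⟨bp, hbp⟩ := Option.isSome_iff_exists.mp (hc q b)
    simp [tilde, union, hbp]
  · classical
    have hfinj : Function.Injective (fun a : A => ((T.δ q a).get (hc q a)).1) := by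
      intro a a' hff
      simp only at hff
      obtain ⟨⟨b1, p1⟩, hbp⟩ := Option.isSome_iff_exists.mp (hc q a)
      obtain ⟨⟨b2, p2⟩, hbp'⟩ := Option.isSome_iff_exists.mp (hc q a')
      simp only [hbp, hbp', Option.get_some] at hff
      exact hinv q a a' b1 p1 p2 (by rw [hbp]) (by rw [hbp', ← hff])
    have hfsurj := Finite.surjective_of_injective hfinj
    obtain ⟨a, ha⟩ := hfsurj b
    obtain ⟨⟨b1, p1⟩, hbp⟩ := Option.isSome_iff_exists.mp (hc q a)
    simp only [hbp, Option.get_some] at ha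
    have hex : ∃ ap : A × Q, T.δ q ap.1 = some (b, ap.2) := ⟨(a, p1), by rw [hbp, ha]⟩
    simp only [tilde, union, inv, dif_pos hex]
    simp

theorem tilde_delta_swap {T : SAut Q A} (hinv : T.Invertible) {s p : Q ⊕ Q} {a b : A}
    (h : T.tilde.δ s a = some (b, p)) : T.tilde.δ (Sum.swap s) b = some (a, Sum.swap p) := by
  cases s with
  | inl q =>
    simp only [tilde, union] at h
    cases hδ : T.δ q a with
    | none => rw [hδ] at h; simp at h
    | some bp =>
      rw [hδ] at h
      simp only [Option.map_some, Option.some_inj] at h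
      obtain ⟨h1, h2⟩ := Prod.mk.injEq .. ▸ h
      subst h1; subst h2
      simp only [Sum.swap_inl, tilde, union]
      rw [inv_delta_of hinv hδ]
      simp [Sum.swap]
  | inr q =>
    simp only [tilde, union] at h
    cases hδ : T.inv.δ q a with
    | none => rw [hδ] at h; simp at h
    | some bp =>
      rw [hδ] at h
      simp only [Option.map_some, Option.some_inj] at h
      obtain ⟨h1, h2⟩ := Prod.mk.injEq .. ▸ h
      subst h1; subst h2
      have := inv_delta_eq_some (show T.inv.δ q a = some (bp.1, bp.2) from by rw [hδ])
      simp only [Sum.swap_inr, tilde, union]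
      rw [this]
      simp [Sum.swap]

theorem tilde_run_swap {T : SAut Q A} (hinv : T.Invertible) {s p : Q ⊕ Q} {w v : List A}
    (h : T.tilde.run s w = some (v, p)) : T.tilde.run (Sum.swap s) v = some (w, Sum.swap p) := by
  induction w generalizing s v with
  | nil =>
    simp only [run, Option.some_inj] at h
    obtain ⟨h1, h2⟩ := Prod.mk.injEq .. ▸ h.symm
    subst h1; subst h2
    simp [run]
  | cons a as ih =>
    simp only [run] at h
    cases hδ : T.tilde.δ s a with
    | none => rw [hδ] at h; simp at h
    | some bp =>
      rw [hδ] at h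
      simp only [Option.bind_some] at h
      cases hr : T.tilde.run bp.2 as with
      | none => rw [hr] at h; simp at h
      | some r =>
        rw [hr] at h
        simp only [Option.map_some, Option.some_inj] at h
        obtain ⟨h1, h2⟩ := Prod.mk.injEq .. ▸ h.symm
        subst h1; subst h2
        have hδ' := tilde_delta_swap hinv (show T.tilde.δ s a = some (bp.1, bp.2) from by
          rw [hδ])
        have hr' := ih (show T.tilde.run bp.2 as = some (r.1, r.2) from by rw [hr])
        simp only [run, hδ', Option.bind_some, hr']
        simp

theorem tilde_act1_swap {T : SAut Q A} (hinv : T.Invertible) {s : Q ⊕ Q} {w v : List A}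
    (h : T.tilde.act1 s w = some v) : T.tilde.act1 (Sum.swap s) v = some w := by
  simp only [act1] at h ⊢
  cases hr : T.tilde.run s w with
  | none => rw [hr] at h; simp at h
  | some r =>
    rw [hr] at h
    simp only [Option.map_some, Option.some_inj] at h
    subst h
    rw [tilde_run_swap hinv (show T.tilde.run s w = some (r.1, r.2) from by rw [hr])]
    simp

/-- formal inverse of a word of tilde-states -/
def invW : List (Q ⊕ Q) → List (Q ⊕ Q) := fun m => (m.map Sum.swap).reverse

theorem invW_invW (m : List (Q ⊕ Q)) : invW (invW m) = m := by
  simp [invW, List.map_reverse, List.map_map, Function.comp_def]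

theorem tilde_act_inv {T : SAut Q A} (hinv : T.Invertible) {m : List (Q ⊕ Q)} {w v : List A}
    (h : T.tilde.act m w = some v) : T.tilde.act (invW m) v = some w := by
  induction m generalizing w v with
  | nil => simp [act] at h; subst h; simp [invW, act]
  | cons s m ih =>
    simp only [act] at h
    cases h1 : T.tilde.act1 s w with
    | none => rw [h1] at h; simp at h
    | some w₁ =>
      rw [h1] at h
      simp only [Option.bind_some] at h
      have hi := ih h
      have : invW (s :: m) = invW m ++ [Sum.swap s] := by simp [invW]
      rw [this, act_append, hi]
      simp only [Option.bind_some, act]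
      rw [tilde_act1_swap hinv h1]
      simp [act]

theorem tilde_act_inv' {T : SAut Q A} (hinv : T.Invertible) {m : List (Q ⊕ Q)} {w v : List A}
    (h : T.tilde.act (invW m) v = some w) : T.tilde.act m w = some v := by
  have := tilde_act_inv hinv h
  rwa [invW_invW] at this



-- ## embedding T into tilde

theorem tilde_run_inl (T : SAut Q A) (q : Q) (w : List A) :
    T.tilde.run (Sum.inl q) w = (T.run q w).map fun r => (r.1, Sum.inl r.2) := by
  induction w generalizing q with
  | nil => simp [run]
  | cons a as ih =>
    simp only [run]
    rw [show T.tilde.δ (Sum.inl q) a = (T.δ q a).map fun bp => (bp.1, Sum.inl bp.2) from rfl]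
    cases T.δ q a with
    | none => simp
    | some bp =>
      simp only [Option.map_some, Option.bind_some]
      rw [ih bp.2]
      cases T.run bp.2 as <;> simp

theorem tilde_act1_inl (T : SAut Q A) (q : Q) (w : List A) :
    T.tilde.act1 (Sum.inl q) w = T.act1 q w := by
  simp only [act1, tilde_run_inl]
  cases T.run q w <;> simp

theorem tilde_act_inl (T : SAut Q A) {l : List Q} {w v : List A} (h : T.act l w = some v) :
    T.tilde.act (l.map Sum.inl) w = some v := by
  induction l generalizing w with
  | nil => simpa [act] using h
  | cons q l ih =>
    simp only [act] at h ⊢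
    cases h1 : T.act1 q w with
    | none => rw [h1] at h; simp at h
    | some w₁ =>
      rw [h1] at h
      simp only [Option.bind_some] at h
      simp only [List.map_cons, act, tilde_act1_inl, h1, Option.bind_some]
      exact ih h

-- ## injectivity of act1

theorem run_inj (T : SAut Q A) (hinv : T.Invertible) {q : Q} {x x' v : List A} {p p' : Q}
    (h : T.run q x = some (v, p)) (h' : T.run q x' = some (v, p')) : x = x' := by
  induction x generalizing x' q v p p' with
  | nil =>
    simp only [run, Option.some_inj] at h
    have h1 : v = [] := by
      have := congrArg Prod.fst h; simpa using this.symm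
    subst h1
    have := T.run_length h'
    simpa using (List.length_eq_zero_iff.mp this.symm).symm
  | cons a as ih =>
    cases x' with
    | nil =>
      simp only [run, Option.some_inj] at h'
      have h1 : v = [] := by
        have := congrArg Prod.fst h'; simpa using this.symm
      subst h1
      have := T.run_length h
      simp at this
    | cons a' as' =>
      simp only [run] at h h'
      cases hδ : T.δ q a with
      | none => rw [hδ] at h; simp at h
      | some bp =>
        cases hδ' : T.δ q a' with
        | none => rw [hδ'] at h'; simp at h'
        | some bp' =>
          obtain ⟨b1, p1⟩ := bp
          obtain ⟨b2, p2⟩ := bp'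
          rw [hδ] at h; rw [hδ'] at h'
          simp only [Option.bind_some] at h h'
          cases hr : T.run p1 as with
          | none => rw [hr] at h; simp at h
          | some r =>
            obtain ⟨w1, q1⟩ := r
            cases hr' : T.run p2 as' with
            | none => rw [hr'] at h'; simp at h'
            | some r' =>
              obtain ⟨w2, q2⟩ := r'
              rw [hr] at h; rw [hr'] at h'
              simp only [Option.map_some, Option.some_inj] at h h'
              have hv : v = b1 :: w1 := (congrArg Prod.fst h).symm
              have hv' : v = b2 :: w2 := (congrArg Prod.fst h').symm
              rw [hv] at hv'
              have hb : b1 = b2 := by injection hv'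
              have hrr : w1 = w2 := by injection hv'
              have ha : a = a' := hinv q a a' b1 p1 p2 (by rw [hδ])
                (by rw [hδ', ← hb])
              subst ha
              rw [hδ] at hδ'
              have hbp : p1 = p2 := by
                have := congrArg (Option.map Prod.snd) hδ'
                simpa using this
              subst hbp
              have has : as = as' := ih (q := p1) (v := w1) (p := q1) (p' := q2)
                (by rw [hr]) (by rw [hr', ← hrr])
              rw [has]

theorem act1_inj (T : SAut Q A) (hinv : T.Invertible) {q : Q} {x x' v : List A}
    (h : T.act1 q x = some v) (h' : T.act1 q x' = some v) : x = x' := by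
  simp only [act1] at h h'
  cases hr : T.run q x with
  | none => rw [hr] at h; simp at h
  | some r =>
    obtain ⟨v1, pp⟩ := r
    cases hr' : T.run q x' with
    | none => rw [hr'] at h'; simp at h'
    | some r' =>
      obtain ⟨v2, pp'⟩ := r'
      rw [hr] at h; rw [hr'] at h'
      simp only [Option.map_some, Option.some_inj] at h h'
      subst h; subst h'
      exact T.run_inj hinv hr hr'

-- ## the orbit

theorem orbit_finite (T : SAut Q A) [Finite A] (u : List A) : (T.orbit u).Finite := by
  apply Set.Finite.subset (List.finite_length_eq A u.length)
  rintro v ⟨l, hl⟩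
  exact T.act_length hl

theorem mem_orbit_self (T : SAut Q A) (u : List A) : u ∈ T.orbit u := ⟨[], rfl⟩

theorem orbit_length (T : SAut Q A) {u v : List A} (h : v ∈ T.orbit u) :
    v.length = u.length := by
  obtain ⟨l, hl⟩ := h
  exact T.act_length hl

theorem act1_isSome' {T : SAut Q A} (hc : T.Complete) (q : Q) (w : List A) :
    (T.act1 q w).isSome := by
  obtain ⟨v, hv⟩ := act1_eq_some hc q w
  simp [hv]


theorem orbit_step (T : SAut Q A) [Finite A] (hc : T.Complete) (hinv : T.Invertible)
    {u w v : List A} (s : Q ⊕ Q) (hw : w ∈ T.orbit u) (h : T.tilde.act1 s w = some v) :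
    v ∈ T.orbit u := by
  cases s with
  | inl q =>
    rw [tilde_act1_inl] at h
    obtain ⟨l, hl⟩ := hw
    refine ⟨l ++ [q], ?_⟩
    rw [act_append, hl, Option.bind_some]
    simp [act, h]
  | inr q =>
    classical
    have hswap := tilde_act1_swap hinv h
    simp only [Sum.swap_inr, tilde_act1_inl] at hswap
    -- hswap : T.act1 q v = some w ; find x in orbit with act1 q x = some w
    set φ : List A → List A := fun x => (T.act1 q x).get (act1_isSome' hc q x) with hφ
    have hmaps : Set.MapsTo φ (T.orbit u) (T.orbit u) := by
      intro x hx
      obtain ⟨l, hl⟩ := hx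
      refine ⟨l ++ [q], ?_⟩
      rw [act_append, hl, Option.bind_some]
      simp [act, φ]
    have hinjOn : Set.InjOn φ (T.orbit u) := by
      intro x hx x' hx' hxx
      have h1 : T.act1 q x = some (φ x) := by simp [φ]
      have h2 : T.act1 q x' = some (φ x') := by simp [φ]
      rw [hxx] at h1
      exact T.act1_inj hinv h1 h2
    have hbij := (Set.Finite.injOn_iff_bijOn_of_mapsTo (T.orbit_finite u) hmaps).mp hinjOn
    obtain ⟨x, hx, hfx⟩ := hbij.surjOn hw
    have h1 : T.act1 q x = some w := by rw [← hfx]; simp [φ]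
    have : x = v := T.act1_inj hinv h1 hswap
    rwa [← this]

theorem orbit_tilde_eq (T : SAut Q A) [Finite A] (hc : T.Complete) (hinv : T.Invertible)
    (u : List A) : T.tilde.orbit u = T.orbit u := by
  apply Set.eq_of_subset_of_subset
  · rintro v ⟨m, hm⟩
    have key : ∀ (m : List (Q ⊕ Q)) (w : List A), w ∈ T.orbit u →
        ∀ v, T.tilde.act m w = some v → v ∈ T.orbit u := by
      intro m
      induction m with
      | nil => intro w hw v hv; simp [act] at hv; rwa [← hv]
      | cons s m ih =>
        intro w hw v hv
        simp only [act] at hv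
        cases h1 : T.tilde.act1 s w with
        | none => rw [h1] at hv; simp at hv
        | some w₁ =>
          rw [h1] at hv
          simp only [Option.bind_some] at hv
          exact ih w₁ (T.orbit_step hc hinv s hw h1) v hv
    exact key m u (T.mem_orbit_self u) v hm
  · rintro v ⟨l, hl⟩
    exact ⟨l.map Sum.inl, tilde_act_inl T hl⟩



theorem act_isSome'' {T : SAut Q A} (hC : T.Complete) (l : List Q) (w : List A) :
    (T.act l w).isSome := by
  obtain ⟨v, hv⟩ := act_eq_some hC l w
  simp [hv]

theorem ncard_orbit_pos (T : SAut Q A) [Finite A] (u : List A) : 0 < (T.orbit u).ncard :=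
  (Set.ncard_pos (T.orbit_finite u)).mpr ⟨u, T.mem_orbit_self u⟩

/-- every orbit element is reached by a word of length `< n` -/
theorem shorten (T : SAut Q A) [Fintype A] (hc : T.Complete) (hinv : T.Invertible)
    (u : List A) (m : List (Q ⊕ Q)) :
    ∃ m' : List (Q ⊕ Q), m'.length < (T.orbit u).ncard ∧
      T.tilde.act m' u = T.tilde.act m u := by
  classical
  have hC' : T.tilde.Complete := tilde_complete hc hinv
  set n := (T.orbit u).ncard with hn
  have hnpos : 0 < n := T.ncard_orbit_pos u
  have main : ∀ k (m : List (Q ⊕ Q)), m.length ≤ k →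
      ∃ m' : List (Q ⊕ Q), m'.length < n ∧ T.tilde.act m' u = T.tilde.act m u := by
    intro k
    induction k with
    | zero =>
      intro m hm
      exact ⟨m, by omega, rfl⟩
    | succ k ih =>
      intro m hm
      by_cases hlen : m.length < n
      · exact ⟨m, hlen, rfl⟩
      · push_neg at hlen
        -- pigeonhole on prefixes
        set S := (T.orbit_finite u).toFinset with hS
        have hScard : S.card = n := by
          rw [hS, hn, Set.ncard_eq_toFinset_card _ (T.orbit_finite u)]
        have hvals : ∀ i : Fin (m.length + 1), ∃ v, T.tilde.act (m.take (i : ℕ)) u = some v :=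
          fun i => act_eq_some hC' _ u
        choose f hf using hvals
        have hmaps : ∀ i : Fin (m.length + 1), f i ∈ S := by
          intro i
          have h2 : f i ∈ T.tilde.orbit u := ⟨m.take (i : ℕ), hf i⟩
          rw [orbit_tilde_eq T hc hinv u] at h2
          rwa [hS, Set.Finite.mem_toFinset]
        have hcard : S.card < (Finset.univ : Finset (Fin (m.length + 1))).card := by
          simp [hScard]
          omega
        obtain ⟨i, -, j, -, hij, hfij⟩ :=
          Finset.exists_ne_map_eq_of_card_lt_of_maps_to hcard (fun i _ => hmaps i)
        have key : ∀ i j : Fin (m.length + 1), (i : ℕ) < j → f i = f j →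
            ∃ m' : List (Q ⊕ Q), m'.length < n ∧ T.tilde.act m' u = T.tilde.act m u := by
          intro i j hlt hfij
          have h1 := hf i
          have h2 := hf j
          rw [hfij] at h1
          have hact : T.tilde.act (m.take (i : ℕ) ++ m.drop (j : ℕ)) u = T.tilde.act m u := by
            have hsplit := act_append T.tilde (m.take (j : ℕ)) (m.drop (j : ℕ)) u
            rw [List.take_append_drop] at hsplit
            rw [act_append, h1, Option.bind_some, hsplit, h2, Option.bind_some]
          have hj : (j : ℕ) ≤ m.length := by omega
          have hlen' : (m.take (i : ℕ) ++ m.drop (j : ℕ)).length ≤ k := by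
            simp only [List.length_append, List.length_take, List.length_drop]
            omega
          obtain ⟨m', hm1, hm2⟩ := ih _ hlen'
          exact ⟨m', hm1, by rw [hm2, hact]⟩
        rcases lt_or_gt_of_ne hij with hlt | hgt
        · exact key i j hlt hfij
        · exact key j i hgt hfij.symm
  exact main m.length m le_rfl

theorem invW_length (m : List (Q ⊕ Q)) : (invW m).length = m.length := by
  simp [invW]

theorem act_cons (T : SAut Q A) (q : Q) (l : List Q) (w : List A) :
    T.act (q :: l) w = (T.act1 q w).bind (T.act l) := rfl

/-- the key construction: rewriting a stabilizing word as a product of short loops -/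
theorem star (T : SAut Q A) [Fintype A] (hc : T.Complete) (hinv : T.Invertible) (u : List A)
    (t : List A → List (Q ⊕ Q))
    (ht : ∀ v ∈ T.orbit u, T.tilde.act (t v) u = some v)
    (htlen : ∀ v ∈ T.orbit u, (t v).length < (T.orbit u).ncard)
    (H : ∀ L : List (Q ⊕ Q), L ≠ [] → T.tilde.act L u = some u →
        L.length < 2 * (T.orbit u).ncard →
        ∀ d, T.tilde.dual L u = some d → ∀ x, T.tilde.act d x = some x) :
    ∀ (l : List (Q ⊕ Q)) (v w : List A), v ∈ T.orbit u → T.tilde.act l v = some w →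
      ∃ B : List (Q ⊕ Q),
        T.tilde.act B u = some u ∧
        (∀ x x₁ x₂ x₃, T.tilde.act (t v) x = some x₁ → T.tilde.act l x₁ = some x₂ →
          T.tilde.act (invW (t w)) x₂ = some x₃ → T.tilde.act B x = some x₃) ∧
        (∀ d, T.tilde.dual B u = some d → ∀ x, T.tilde.act d x = some x) := by
  have hC' : T.tilde.Complete := tilde_complete hc hinv
  intro l
  induction l with
  | nil =>
    intro v w hv hw
    simp only [act, Option.some_inj] at hw
    subst hw
    refine ⟨[], rfl, ?_, ?_⟩
    · intro x x₁ x₂ x₃ hx1 hx2 hx3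
      simp only [act, Option.some_inj] at hx2 ⊢
      subst hx2
      have := tilde_act_inv hinv hx1
      rw [this] at hx3
      exact Option.some_inj.mp hx3
    · intro d hd x
      simp only [dual, Option.some_inj] at hd
      subst hd
      rfl
  | cons s l ih =>
    intro v w hv hw
    rw [act_cons] at hw
    cases h1 : T.tilde.act1 s v with
    | none => rw [h1] at hw; simp at hw
    | some v' =>
      rw [h1, Option.bind_some] at hw
      have hv' : v' ∈ T.orbit u := T.orbit_step hc hinv s hv h1
      obtain ⟨B', hB'u, hπ, hsec⟩ := ih v' w hv' hw
      have htv := ht v hv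
      have htv' := ht v' hv'
      have hinvtv' : T.tilde.act (invW (t v')) v' = some u := tilde_act_inv hinv htv'
      set C : List (Q ⊕ Q) := t v ++ s :: invW (t v') with hC
      have hCact : ∀ x x₁ z₁ z₂, T.tilde.act (t v) x = some x₁ → T.tilde.act1 s x₁ = some z₁ →
          T.tilde.act (invW (t v')) z₁ = some z₂ → T.tilde.act C x = some z₂ := by
        intro x x₁ z₁ z₂ ha hb hcc
        rw [hC, act_append, ha, Option.bind_some, act_cons, hb, Option.bind_some, hcc]
      have hCu : T.tilde.act C u = some u := hCact u v v' u htv h1 hinvtv'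
      refine ⟨C ++ B', ?_, ?_, ?_⟩
      · rw [act_append, hCu, Option.bind_some, hB'u]
      · intro x x₁ x₂ x₃ hx1 hx2 hx3
        rw [act_cons] at hx2
        cases h2 : T.tilde.act1 s x₁ with
        | none => rw [h2] at hx2; simp at hx2
        | some z₁ =>
          rw [h2, Option.bind_some] at hx2
          obtain ⟨z₂, hz₂⟩ := act_eq_some hC' (invW (t v')) z₁
          have hCx : T.tilde.act C x = some z₂ := hCact x x₁ z₁ z₂ hx1 h2 hz₂
          have htv'z : T.tilde.act (t v') z₂ = some z₁ := tilde_act_inv' hinv hz₂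
          have hB'x := hπ z₂ z₁ x₂ x₃ htv'z hx2 hx3
          rw [act_append, hCx, Option.bind_some, hB'x]
      · intro d hd x
        obtain ⟨dC, hdC⟩ := dual_eq_some hC' C u
        obtain ⟨dB', hdB'⟩ := dual_eq_some hC' B' u
        have hdapp := T.tilde.dual_append hCu hdC hdB'
        rw [hd] at hdapp
        have hdd : d = dC ++ dB' := Option.some_inj.mp hdapp
        subst hdd
        have hCne : C ≠ [] := by
          rw [hC]
          intro hcon
          have := congrArg List.length hcon
          simp at this
        have hClen : C.length < 2 * (T.orbit u).ncard := by
          have l1 := htlen v hv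
          have l2 := htlen v' hv'
          rw [hC]
          simp only [List.length_append, List.length_cons, invW_length]
          omega
        have hdCx := H C hCne hCu hClen dC hdC x
        obtain ⟨ddd, hddd⟩ := dual_eq_some hC' B' u
        rw [act_append, hdCx, Option.bind_some]
        exact hsec dB' hdB' x


end SAut

/-- for a G-automaton, if the shifted stabilizer of `u` is nontrivial, it contains
a nontrivial element represented by a stabilizing sequence of length `< 2n`, `n = |Q* ∘ u|`. -/
theorem short_nontrivial_shifted_stabilizer_element {Q A : Type} [Fintype Q] [Fintype A]
    (T : SAut Q A) (hc : T.Complete) (hinv : T.Invertible) (u : List A)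
    (hnt : ∃ f ∈ T.tilde.shiftedStabFun u, f ≠ fun w : List A => some w) :
    ∃ l ∈ T.tilde.stab u, l.length < 2 * (T.orbit u).ncard ∧
      ∃ l' : List (Q ⊕ Q), T.tilde.dual l u = some l' ∧
        T.tilde.act l' ≠ fun w : List A => some w := by
  classical
  open SAut in
  obtain ⟨f, ⟨l, hlstab, l', hldual, hfeq⟩, hfne⟩ := hnt
  obtain ⟨hlne, hlu⟩ := hlstab
  subst hfeq
  have hC' : T.tilde.Complete := SAut.tilde_complete hc hinv
  set n := (T.orbit u).ncard with hn
  have hnpos : 0 < n := T.ncard_orbit_pos u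
  have ht0 : ∀ v ∈ T.orbit u, ∃ m : List (Q ⊕ Q), m.length < n ∧
      T.tilde.act m u = some v := by
    intro v hv
    rw [← SAut.orbit_tilde_eq T hc hinv u] at hv
    obtain ⟨m, hm⟩ := hv
    obtain ⟨m', hm'len, hm'act⟩ := SAut.shorten T hc hinv u m
    exact ⟨m', hm'len, by rw [hm'act, hm]⟩
  have hex : ∀ v : List A, ∃ m : List (Q ⊕ Q),
      (v ∈ T.orbit u → m.length < n ∧ T.tilde.act m u = some v) ∧ (v = u → m = []) := by
    intro v
    by_cases hvu : v = u
    · subst hvu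
      exact ⟨[], fun _ => ⟨hnpos, rfl⟩, fun _ => rfl⟩
    · by_cases hv : v ∈ T.orbit u
      · obtain ⟨m, hm1, hm2⟩ := ht0 v hv
        exact ⟨m, fun _ => ⟨hm1, hm2⟩, fun h => absurd h hvu⟩
      · exact ⟨[], fun h => absurd h hv, fun h => absurd h hvu⟩
  choose t htp htuu using hex
  have ht : ∀ v ∈ T.orbit u, T.tilde.act (t v) u = some v := fun v hv => (htp v hv).2
  have htlen : ∀ v ∈ T.orbit u, (t v).length < n := fun v hv => (htp v hv).1
  have htu : t u = [] := htuu u rfl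
  by_contra hcon
  push_neg at hcon
  have H : ∀ L : List (Q ⊕ Q), L ≠ [] → T.tilde.act L u = some u →
      L.length < 2 * n → ∀ d, T.tilde.dual L u = some d →
      ∀ x, T.tilde.act d x = some x := by
    intro L hne hLu hlen d hd x
    have := hcon L ⟨hne, hLu⟩ hlen d hd
    exact congrFun this x
  obtain ⟨B, hBu, hπ, hsec⟩ := SAut.star T hc hinv u t ht htlen H l u u
    (T.mem_orbit_self u) hlu
  rw [Function.ne_iff] at hfne
  obtain ⟨x₀, hx₀⟩ := hfne
  obtain ⟨z, hz⟩ := SAut.act_eq_some hC' l (u ++ x₀)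
  have h1 : T.tilde.act (t u) (u ++ x₀) = some (u ++ x₀) := by rw [htu]; rfl
  have h3 : T.tilde.act (SAut.invW (t u)) z = some z := by rw [htu]; rfl
  have hBux : T.tilde.act B (u ++ x₀) = some z := hπ (u ++ x₀) (u ++ x₀) z z h1 hz h3
  obtain ⟨dB, hdB⟩ := SAut.dual_eq_some hC' B u
  have hBcross := SAut.act_cross T.tilde hBu hdB x₀
  have hdBx := hsec dB hdB x₀
  rw [hBcross, hdBx] at hBux
  simp only [Option.map_some, Option.some_inj] at hBux
  have hlcross := SAut.act_cross T.tilde hlu hldual x₀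
  rw [hz, ← hBux] at hlcross
  cases hlx : T.tilde.act l' x₀ with
  | none => rw [hlx] at hlcross; simp at hlcross
  | some y =>
    rw [hlx] at hlcross
    simp only [Option.map_some, Option.some_inj] at hlcross
    have : y = x₀ := List.append_cancel_left hlcross.symm
    rw [this] at hlx
    exact hx₀ hlx
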